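/- arXiv:1801.00624 — 2 statements merged into one kernel-verified Lean document; each statement's English description precedes it below -/
import Mathlib

section
/- Let n > 1 and let I_{2n} = {−n, −n+1, …, n−1}. Let Φ be the Feigin–Tsygan isomorphism gJ(R) → gl_{I_{2n}}(J(R)) determined by Φ(E_{m+2rn, m'+2sn}(a)) = e_{m,m'}(E_{r,s}(a)) for m,m' ∈ I_{2n}, r,s ∈ ℤ, a ∈ R. Define o_J^{even}(R) = {X ∈ gJ(R) : τ_{−1}^s(X) = −X}, where τ_{−1}^s(X) = J_{−1}^s ᵗ(X) J_{−1}^s with J_{−1}^s = Σ_{i∈ℤ} E_{i,−1−i}, and define o_{2n}(J(R)) = {X ∈ gl_{I_{2n}}(J(R)) : X^† J_n^D + J_n^D X = 0}, where J_n^D = Σ_{i=−n}^{n−1} e_{i,−i−1} and X^† is the transpose of X with the anti-involution ∗ of J(R) (E_{k,l}(r)^∗ = E_{−l,−k}(r̄)) applied to each entry. Then Φ restricts to an isomorphism of Lie algebras o_J^{even}(R) → o_{2n}(J(R)). -/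
/-!
Writing every integer uniquely as `m + 2nr` with `m ∈ I_{2n}` identifies `ℤ` with
`I_{2n} × ℤ`, and `Φ` is nothing but this reindexing of rows and columns. Hence `Φ` is bijective,
it preserves bandedness in both directions (the block offset `|r - s|` and the entry offset
`|i - j|` control each other up to the factor `2n`), and it is multiplicative because a sum over
`ℤ` splits into sums over the residue classes. The reflection `i ↦ -1 - i` in `τ_{−1}^s`
becomes `(m, r) ↦ (-1 - m, -r)`, which is exactly what `J_n^D` and `∗` encode, so
`Φ(X)^† J_n^D + J_n^D Φ(X)` is `Φ(τ_{−1}^s(X) + X)` with its block rows permuted.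
-/

def HasBand {R : Type*} [Zero R] (A : ℤ → ℤ → R) (N : ℤ) : Prop :=
  ∀ i j : ℤ, N < |i - j| → A i j = 0

def IsJacobi {R : Type*} [Zero R] (A : ℤ → ℤ → R) : Prop := ∃ N : ℤ, HasBand A N

noncomputable def jmul {R : Type*} [Ring R] (A B : ℤ → ℤ → R) : ℤ → ℤ → R :=
  fun i j => ∑ᶠ l : ℤ, A i l * B l j

noncomputable def lieB {R : Type*} [Ring R] (A B : ℤ → ℤ → R) : ℤ → ℤ → R :=
  jmul A B - jmul B A

def idMat {R : Type*} [Ring R] : ℤ → ℤ → R := fun i j => if i = j then 1 else 0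

/-- `τ_{−1}^s(X) = J_{−1}^s ᵗ(X) J_{−1}^s` where `J_{−1}^s = Σ_i E_{i,−1−i}`;
entrywise `τ_{−1}^s(X)_{i,j} = bar (X_{−1−j,−1−i})`. -/
def tauD {R : Type*} (bar : R → R) (X : ℤ → ℤ → R) : ℤ → ℤ → R :=
  fun i j => bar (X (-1 - j) (-1 - i))

/-- The anti-involution `∗` of `J(R)`: `E_{k,l}(r)^∗ = E_{−l,−k}(r̄)`. -/
def astar {R : Type*} (bar : R → R) (X : ℤ → ℤ → R) : ℤ → ℤ → R :=
  fun i j => bar (X (-j) (-i))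

/-- The index set `I_{2n} = {−n, …, n−1}`. -/
noncomputable def Iev (n : ℕ) : Finset ℤ := Finset.Icc (-(n : ℤ)) ((n : ℤ) - 1)

/-- The restriction of the Feigin–Tsygan isomorphism:
`Φ(X)_{m,m'} (r,s) = X(m + 2rn, m' + 2sn)`. -/
def PhiEv {R : Type*} (n : ℕ) (X : ℤ → ℤ → R) :
    {i : ℤ // i ∈ Iev n} → {i : ℤ // i ∈ Iev n} → ℤ → ℤ → R :=
  fun m m' r s => X ((m : ℤ) + r * (2 * n)) ((m' : ℤ) + s * (2 * n))

/-- Multiplication of matrices indexed by `I_{2n}` with entries in `J(R)`. -/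
noncomputable def matMulEv {R : Type*} [Ring R] (n : ℕ)
    (A B : {i : ℤ // i ∈ Iev n} → {i : ℤ // i ∈ Iev n} → ℤ → ℤ → R) :
    {i : ℤ // i ∈ Iev n} → {i : ℤ // i ∈ Iev n} → ℤ → ℤ → R :=
  fun m m' => ∑ p : {i : ℤ // i ∈ Iev n}, jmul (A m p) (B p m')

/-- `A^†`: transpose with `∗` applied to each entry. -/
def daggerEv {R : Type*} (bar : R → R) (n : ℕ)
    (A : {i : ℤ // i ∈ Iev n} → {i : ℤ // i ∈ Iev n} → ℤ → ℤ → R) :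
    {i : ℤ // i ∈ Iev n} → {i : ℤ // i ∈ Iev n} → ℤ → ℤ → R :=
  fun m m' => astar bar (A m' m)

/-- `J_n^D = Σ_{i=−n}^{n−1} e_{i,−i−1}` (entries in `J(R)`). -/
def JnD {R : Type*} [Ring R] (n : ℕ) :
    {i : ℤ // i ∈ Iev n} → {i : ℤ // i ∈ Iev n} → ℤ → ℤ → R :=
  fun m m' => if (m' : ℤ) = -(m : ℤ) - 1 then idMat else 0

open Function

local notation "𝕀[" n "]" => {i : ℤ // i ∈ Iev n}

lemma HasBand.mono {R : Type*} [Zero R] {A : ℤ → ℤ → R} {N N' : ℤ} (hA : HasBand A N)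
    (hN : N ≤ N') : HasBand A N' :=
  fun i j h => hA i j (hN.trans_lt h)

lemma exists_hasBand_forall {ι R : Type*} [Finite ι] [Zero R] {A : ι → ℤ → ℤ → R}
    (hA : ∀ a, IsJacobi (A a)) : ∃ N, ∀ a, HasBand (A a) N := by
  choose N hN using hA
  obtain ⟨M, hM⟩ := Finite.exists_le N
  exact ⟨M, fun a => (hN a).mono (hM a)⟩

lemma IsJacobi.hasFiniteSupport_row {R : Type*} [Zero R] {X : ℤ → ℤ → R} (hX : IsJacobi X)
    (i : ℤ) : (X i).HasFiniteSupport := by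
  obtain ⟨N, hN⟩ := hX
  refine (Set.finite_Icc (i - N) (i + N)).subset fun t ht => ?_
  by_contra hout
  refine ht (hN i t ?_)
  rw [Set.mem_Icc] at hout
  rw [lt_abs]
  omega

namespace Iev

variable {n : ℕ}

lemma mem_iff {m : ℤ} : m ∈ Iev n ↔ -(n : ℤ) ≤ m ∧ m ≤ n - 1 := by
  simp [Iev]

def reflect (m : 𝕀[n]) : 𝕀[n] :=
  ⟨-m - 1, by have := mem_iff.1 m.2; rw [mem_iff]; omega⟩

@[simp] lemma coe_reflect (m : 𝕀[n]) : (reflect m : ℤ) = -m - 1 := rfl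

lemma reflect_involutive : Involutive (reflect (n := n)) :=
  fun m => Subtype.ext (by simp)

/-- Division by `2n` with remainder in `I_{2n}`. -/
def blockEquiv (hn : 0 < n) : 𝕀[n] × ℤ ≃ ℤ where
  toFun q := q.1 + q.2 * (2 * n)
  invFun t := (⟨(t + n) % (2 * n) - n, by
      have h0 : (0 : ℤ) < 2 * n := by positivity
      have := Int.emod_nonneg (t + n) h0.ne'
      have := Int.emod_lt_of_pos (t + n) h0
      rw [mem_iff]; omega⟩, (t + n) / (2 * n))
  left_inv := by
    rintro ⟨m, r⟩
    have hm := mem_iff.1 m.2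
    have h0 : (0 : ℤ) < 2 * n := by positivity
    have hrw : (m : ℤ) + r * (2 * n) + n = m + n + r * (2 * n) := by ring
    ext
    · simp only [hrw, Int.add_mul_emod_self_right, Int.emod_eq_of_lt (by omega : 0 ≤ (m : ℤ) + n)
        (by omega : (m : ℤ) + n < 2 * n)]
      ring
    · simp only [hrw, Int.add_mul_ediv_right _ _ h0.ne', Int.ediv_eq_zero_of_lt
        (by omega : 0 ≤ (m : ℤ) + n) (by omega : (m : ℤ) + n < 2 * n), zero_add]
  right_inv t := by
    have := Int.emod_add_mul_ediv (t + n) (2 * n)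
    simp only
    linarith

lemma abs_sub_lt_of_mem {m m' : ℤ} (hm : m ∈ Iev n) (hm' : m' ∈ Iev n) :
    |m - m'| < 2 * n := by
  rw [mem_iff] at hm hm'
  rw [abs_lt]; constructor <;> omega

lemma abs_sub_le_abs_add_mul_sub {m m' r s : ℤ} (hm : m ∈ Iev n) (hm' : m' ∈ Iev n) :
    |r - s| ≤ |m + r * (2 * n) - (m' + s * (2 * n))| := by
  have hmm := abs_sub_lt_of_mem hm hm'
  rw [show m + r * (2 * n) - (m' + s * (2 * n)) = (r - s) * (2 * n) + (m - m') by ring]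
  have hc : (0 : ℤ) < 2 * n := (abs_nonneg _).trans_lt hmm
  have htri := abs_sub_abs_le_abs_sub ((r - s) * (2 * n)) (-(m - m'))
  rw [abs_neg, sub_neg_eq_add, abs_mul, abs_of_pos hc] at htri
  rcases (abs_nonneg (r - s)).eq_or_lt with h | h
  · rw [← h]; exact abs_nonneg _
  · nlinarith [mul_nonneg (by omega : (0 : ℤ) ≤ |r - s| - 1) (by omega : (0 : ℤ) ≤ 2 * n - 1)]

lemma abs_add_mul_sub_lt {m m' r s : ℤ} (hm : m ∈ Iev n) (hm' : m' ∈ Iev n) :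
    |m + r * (2 * n) - (m' + s * (2 * n))| < 2 * n * (|r - s| + 1) := by
  have hmm := abs_sub_lt_of_mem hm hm'
  rw [show m + r * (2 * n) - (m' + s * (2 * n)) = (r - s) * (2 * n) + (m - m') by ring]
  calc |(r - s) * (2 * n) + (m - m')| ≤ |r - s| * (2 * n) + |m - m'| := by
        grw [abs_add_le, abs_mul, abs_of_nonneg (by positivity : (0 : ℤ) ≤ 2 * n)]
    _ < 2 * n * (|r - s| + 1) := by linarith

end Iev

open Iev

section Reindexing

variable {R : Type*} {n : ℕ}

lemma PhiEv_apply_eq (hn : 0 < n) (X : ℤ → ℤ → R) (m m' : 𝕀[n]) (r s : ℤ) :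
    PhiEv n X m m' r s = X (blockEquiv hn (m, r)) (blockEquiv hn (m', s)) := rfl

def phiEvEquiv (hn : 0 < n) : (ℤ → ℤ → R) ≃ (𝕀[n] → 𝕀[n] → ℤ → ℤ → R) where
  toFun := PhiEv n
  invFun A i j :=
    A (blockEquiv hn |>.symm i).1 (blockEquiv hn |>.symm j).1
      (blockEquiv hn |>.symm i).2 (blockEquiv hn |>.symm j).2
  left_inv X := by
    funext i j
    change X (blockEquiv hn ((blockEquiv hn).symm i))
      (blockEquiv hn ((blockEquiv hn).symm j)) = X i j
    simp only [Equiv.apply_symm_apply]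
  right_inv A := by
    funext m m' r s
    simp only [PhiEv_apply_eq hn, Equiv.symm_apply_apply]

@[simp] lemma coe_phiEvEquiv (hn : 0 < n) : ⇑(phiEvEquiv (R := R) hn) = PhiEv n := rfl

lemma phiEvEquiv_symm_apply (hn : 0 < n) (A : 𝕀[n] → 𝕀[n] → ℤ → ℤ → R) (m m' : 𝕀[n])
    (r s : ℤ) :
    (phiEvEquiv hn).symm A (blockEquiv hn (m, r)) (blockEquiv hn (m', s)) = A m m' r s :=
  congrFun (congrFun (congrFun (congrFun ((phiEvEquiv hn).apply_symm_apply A) m) m') r) s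

end Reindexing

section Bands

variable {R : Type*} [Zero R] {n : ℕ}

lemma isJacobi_PhiEv {X : ℤ → ℤ → R} (hX : IsJacobi X) (m m' : 𝕀[n]) :
    IsJacobi (PhiEv n X m m') :=
  let ⟨N, hN⟩ := hX
  ⟨N, fun _ _ h => hN _ _ (h.trans_le (abs_sub_le_abs_add_mul_sub m.2 m'.2))⟩

lemma isJacobi_phiEvEquiv_symm (hn : 0 < n) {A : 𝕀[n] → 𝕀[n] → ℤ → ℤ → R}
    (hA : ∀ m m', IsJacobi (A m m')) : IsJacobi ((phiEvEquiv hn).symm A) := by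
  obtain ⟨N, hN⟩ := exists_hasBand_forall (A := fun q : 𝕀[n] × 𝕀[n] => A q.1 q.2)
    fun q => hA q.1 q.2
  refine ⟨2 * n * (N + 1), fun i j hij => ?_⟩
  obtain ⟨⟨m, r⟩, rfl⟩ := (blockEquiv hn).surjective i
  obtain ⟨⟨m', s⟩, rfl⟩ := (blockEquiv hn).surjective j
  rw [phiEvEquiv_symm_apply]
  refine hN (m, m') r s ?_
  have hlt := hij.trans (abs_add_mul_sub_lt m.2 m'.2)
  have := lt_of_mul_lt_mul_left hlt (by positivity)
  linarith

end Bands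

section Products

variable {R : Type*} [Ring R] {n : ℕ}

lemma matMulEv_PhiEv (hn : 0 < n) {X : ℤ → ℤ → R} (hX : IsJacobi X) (Y : ℤ → ℤ → R) :
    matMulEv n (PhiEv n X) (PhiEv n Y) = PhiEv n (jmul X Y) := by
  funext m m' r s
  simp only [matMulEv, Finset.sum_apply]
  rw [PhiEv_apply_eq hn, jmul, ← finsum_comp_equiv (blockEquiv hn), finsum_curry _ ?_,
    finsum_eq_sum_of_fintype]
  · rfl
  · exact ((hX.hasFiniteSupport_row _).fun_mul_left (Y · _)).fun_comp_of_injective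
      (blockEquiv hn).injective

end Products

section Orthogonality

variable {R : Type*} [Ring R] {n : ℕ}

lemma jmul_idMat (A : ℤ → ℤ → R) : jmul A idMat = A := by
  funext i j
  rw [jmul, finsum_eq_single _ j fun l hl => by simp [idMat, hl]]
  simp [idMat]

lemma idMat_jmul (A : ℤ → ℤ → R) : jmul idMat A = A := by
  funext i j
  rw [jmul, finsum_eq_single _ i fun l hl => by simp [idMat, Ne.symm hl]]
  simp [idMat]

lemma jmul_zero (A : ℤ → ℤ → R) : jmul A 0 = 0 := by
  funext i j
  simp [jmul]

lemma zero_jmul (A : ℤ → ℤ → R) : jmul 0 A = 0 := by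
  funext i j
  simp [jmul]

lemma matMulEv_JnD (A : 𝕀[n] → 𝕀[n] → ℤ → ℤ → R) (m m' : 𝕀[n]) :
    matMulEv n A (JnD n) m m' = A m (reflect m') := by
  rw [matMulEv, Finset.sum_eq_single (reflect m')]
  · simp [JnD, jmul_idMat]
  · intro p _ hp
    rw [JnD, if_neg fun h => hp (Subtype.ext (by simp; omega)), jmul_zero]
  · simp

lemma JnD_matMulEv (A : 𝕀[n] → 𝕀[n] → ℤ → ℤ → R) (m m' : 𝕀[n]) :
    matMulEv n (JnD n) A m m' = A (reflect m) m' := by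
  rw [matMulEv, Finset.sum_eq_single (reflect m)]
  · simp [JnD, idMat_jmul]
  · intro p _ hp
    rw [JnD, if_neg fun h => hp (Subtype.ext (by simpa using h)), zero_jmul]
  · simp

lemma PhiEv_zero : PhiEv n (0 : ℤ → ℤ → R) = 0 := rfl

lemma daggerEv_PhiEv_mul_JnD_add (bar : R → R) (X : ℤ → ℤ → R) :
    matMulEv n (daggerEv bar n (PhiEv n X)) (JnD n) + matMulEv n (JnD n) (PhiEv n X) =
      fun m => PhiEv n (tauD bar X + X) (reflect m) := by
  funext m m' r s
  simp only [Pi.add_apply, matMulEv_JnD, JnD_matMulEv, daggerEv, astar, PhiEv, tauD, coe_reflect]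
  congr 3 <;> ring

lemma tauD_eq_neg_iff (hn : 0 < n) (bar : R → R) (X : ℤ → ℤ → R) :
    tauD bar X = -X ↔
      matMulEv n (daggerEv bar n (PhiEv n X)) (JnD n) + matMulEv n (JnD n) (PhiEv n X) = 0 := by
  rw [daggerEv_PhiEv_mul_JnD_add, eq_neg_iff_add_eq_zero,
    ← (phiEvEquiv (R := R) hn).injective.eq_iff, coe_phiEvEquiv, PhiEv_zero]
  constructor
  · intro h
    rw [h]
    rfl
  · intro h
    funext m
    simpa [reflect_involutive m] using congrFun h (reflect m)

end Orthogonality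

theorem statement8_general (k R : Type*) [Field k] [Ring R] [Algebra k R]
    (bar : R →ₗ[k] R) (n : ℕ) (hn : 1 < n) :
    -- well-definedness: entries of `Φ(X)` lie in `J(R)`
    (∀ X : ℤ → ℤ → R, IsJacobi X →
      ∀ m m' : {i : ℤ // i ∈ Iev n}, IsJacobi (PhiEv n X m m')) ∧
    -- `Φ` maps `o_J^{even}(R)` exactly onto `o_{2n}(J(R))`
    (∀ X : ℤ → ℤ → R, IsJacobi X →
      (tauD (⇑bar) X = -X ↔
        matMulEv n (daggerEv (⇑bar) n (PhiEv n X)) (JnD n) +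
          matMulEv n (JnD n) (PhiEv n X) = 0)) ∧
    -- `Φ` is a homomorphism of Lie algebras
    (∀ X Y : ℤ → ℤ → R, IsJacobi X → IsJacobi Y →
      PhiEv n (lieB X Y) =
        matMulEv n (PhiEv n X) (PhiEv n Y) - matMulEv n (PhiEv n Y) (PhiEv n X)) ∧
    -- injectivity on `o_J^{even}(R)`
    (∀ X Y : ℤ → ℤ → R, IsJacobi X → IsJacobi Y → tauD (⇑bar) X = -X →
      tauD (⇑bar) Y = -Y → PhiEv n X = PhiEv n Y → X = Y) ∧
    -- surjectivity onto `o_{2n}(J(R))`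
    (∀ A : {i : ℤ // i ∈ Iev n} → {i : ℤ // i ∈ Iev n} → ℤ → ℤ → R,
      (∀ m m', IsJacobi (A m m')) →
      matMulEv n (daggerEv (⇑bar) n A) (JnD n) + matMulEv n (JnD n) A = 0 →
      ∃ X : ℤ → ℤ → R, IsJacobi X ∧ tauD (⇑bar) X = -X ∧ PhiEv n X = A) := by
  have hn0 : 0 < n := by omega
  refine ⟨fun X hX => isJacobi_PhiEv hX, fun X _ => tauD_eq_neg_iff hn0 bar X,
    fun X Y hX hY => ?_, fun X Y _ _ _ _ h => (phiEvEquiv hn0).injective h,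
    fun A hA hA_orth => ?_⟩
  · rw [matMulEv_PhiEv hn0 hX, matMulEv_PhiEv hn0 hY]
    rfl
  · have hPhi : PhiEv n ((phiEvEquiv hn0).symm A) = A := (phiEvEquiv hn0).apply_symm_apply A
    refine ⟨_, isJacobi_phiEvEquiv_symm hn0 hA, ?_, hPhi⟩
    rwa [tauD_eq_neg_iff hn0, hPhi]

theorem statement8 (k R : Type*) [Field k] [CharZero k] [Ring R] [Algebra k R]
    (bar : R →ₗ[k] R) (hbar_mul : ∀ r s : R, bar (r * s) = bar s * bar r)
    (hbar_inv : ∀ r : R, bar (bar r) = r) (n : ℕ) (hn : 1 < n) :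
    -- well-definedness: entries of `Φ(X)` lie in `J(R)`
    (∀ X : ℤ → ℤ → R, IsJacobi X →
      ∀ m m' : {i : ℤ // i ∈ Iev n}, IsJacobi (PhiEv n X m m')) ∧
    -- `Φ` maps `o_J^{even}(R)` exactly onto `o_{2n}(J(R))`
    (∀ X : ℤ → ℤ → R, IsJacobi X →
      (tauD (⇑bar) X = -X ↔
        matMulEv n (daggerEv (⇑bar) n (PhiEv n X)) (JnD n) +
          matMulEv n (JnD n) (PhiEv n X) = 0)) ∧
    -- `Φ` is a homomorphism of Lie algebras
    (∀ X Y : ℤ → ℤ → R, IsJacobi X → IsJacobi Y →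
      PhiEv n (lieB X Y) =
        matMulEv n (PhiEv n X) (PhiEv n Y) - matMulEv n (PhiEv n Y) (PhiEv n X)) ∧
    -- injectivity on `o_J^{even}(R)`
    (∀ X Y : ℤ → ℤ → R, IsJacobi X → IsJacobi Y → tauD (⇑bar) X = -X →
      tauD (⇑bar) Y = -Y → PhiEv n X = PhiEv n Y → X = Y) ∧
    -- surjectivity onto `o_{2n}(J(R))`
    (∀ A : {i : ℤ // i ∈ Iev n} → {i : ℤ // i ∈ Iev n} → ℤ → ℤ → R,
      (∀ m m', IsJacobi (A m m')) →
      matMulEv n (daggerEv (⇑bar) n A) (JnD n) + matMulEv n (JnD n) A = 0 →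
      ∃ X : ℤ → ℤ → R, IsJacobi X ∧ tauD (⇑bar) X = -X ∧ PhiEv n X = A) :=
  statement8_general k R bar n hn
end

section
/- The map Ψ : gJ(R) × gJ(R) → R^{ab}, Ψ(X,Y) = Tr((I_+ Y I_−)(I_− X I_+) − (I_+ X I_−)(I_− Y I_+)), is a 2-cocycle on the Lie algebra gJ(R) with values in the trivial module R^{ab}: Ψ is k-bilinear, skew-symmetric (Ψ(X,Y) = −Ψ(Y,X)), and satisfies Ψ([X,Y],Z) + Ψ([Y,Z],X) + Ψ([Z,X],Y) = 0 for all X,Y,Z ∈ gJ(R). -/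
def Iplus (R : Type*) [Zero R] [One R] : ℤ → ℤ → R :=
  fun i j => if i = j ∧ 0 ≤ i then 1 else 0

def Iminus (R : Type*) [Zero R] [One R] : ℤ → ℤ → R :=
  fun i j => if i = j ∧ i < 0 then 1 else 0

def commSpan (k R : Type*) [Field k] [Ring R] [Algebra k R] : Submodule k R :=
  Submodule.span k {x : R | ∃ r s : R, x = r * s - s * r}

abbrev Rab (k R : Type*) [Field k] [Ring R] [Algebra k R] : Type _ :=
  R ⧸ commSpan k R

noncomputable def TrAb (k : Type*) {R : Type*} [Field k] [Ring R] [Algebra k R]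
    (A : ℤ → ℤ → R) : Rab k R :=
  Submodule.Quotient.mk (∑ᶠ i : ℤ, A i i)

/-- The cocycle `Ψ(X,Y) = Tr((I_+YI_−)(I_−XI_+) − (I_+XI_−)(I_−YI_+))`. -/
noncomputable def Psi (k : Type*) {R : Type*} [Field k] [Ring R] [Algebra k R]
    (X Y : ℤ → ℤ → R) : Rab k R :=
  TrAb k
    (jmul (jmul (jmul (Iplus R) Y) (Iminus R)) (jmul (jmul (Iminus R) X) (Iplus R)) -
      jmul (jmul (jmul (Iplus R) X) (Iminus R)) (jmul (jmul (Iminus R) Y) (Iplus R)))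

/-! auxiliary -/

def eps (a b : ℤ) : ℤ := (if 0 ≤ b then 1 else 0) - (if 0 ≤ a then 1 else 0)

lemma eps_straddle {a b : ℤ} (h : eps a b ≠ 0) : (a < 0 ∧ 0 ≤ b) ∨ (b < 0 ∧ 0 ≤ a) := by
  unfold eps at h; split_ifs at h <;> omega

section Band
variable {R : Type*} [Zero R]

lemma band_le {A : ℤ → ℤ → R} {N i j : ℤ} (hA : HasBand A N) (h : A i j ≠ 0) :
    -N ≤ i - j ∧ i - j ≤ N := by
  have h2 : ¬ N < |i - j| := fun hh => h (hA i j hh)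
  rw [not_lt] at h2
  exact abs_le.mp h2

lemma HasBand.mono_s14 {A : ℤ → ℤ → R} {N M : ℤ} (hA : HasBand A N) (h : N ≤ M) : HasBand A M :=
  fun i j hij => hA i j (lt_of_le_of_lt h hij)

end Band

lemma finsum_box {M : Type*} [AddCommMonoid M] (f : ℤ → M) (C : ℤ)
    (h : ∀ i, f i ≠ 0 → -C ≤ i ∧ i ≤ C) : ∑ᶠ i, f i = ∑ i ∈ Finset.Icc (-C) C, f i := by
  apply finsum_eq_sum_of_support_subset
  intro i hi
  simp only [Finset.coe_Icc, Set.mem_Icc]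
  exact h i hi

section JB
variable {R : Type*} [Ring R]

lemma jmul_apply (A B : ℤ → ℤ → R) (i j : ℤ) : jmul A B i j = ∑ᶠ l, A i l * B l j := rfl

lemma lieB_apply (A B : ℤ → ℤ → R) (i j : ℤ) :
    lieB A B i j = jmul A B i j - jmul B A i j := rfl

lemma jmul_band {A B : ℤ → ℤ → R} {N M : ℤ} (hA : HasBand A N) (hB : HasBand B M) :
    HasBand (jmul A B) (N + M) := by
  intro i j hij
  apply finsum_eq_zero_of_forall_eq_zero
  intro l
  by_cases h1 : A i l = 0
  · rw [h1, zero_mul]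
  by_cases h2 : B l j = 0
  · rw [h2, mul_zero]
  exfalso
  have e1 := band_le hA h1
  have e2 := band_le hB h2
  rcases abs_cases (i - j) with ⟨h3, _⟩ | ⟨h3, _⟩ <;> omega

lemma lieB_band {A B : ℤ → ℤ → R} {N : ℤ} (hA : HasBand A N) (hB : HasBand B N) :
    HasBand (lieB A B) (N + N) := by
  intro i j hij
  rw [lieB_apply, jmul_band hA hB i j hij, jmul_band hB hA i j hij, sub_zero]

lemma band_add {A B : ℤ → ℤ → R} {N : ℤ} (hA : HasBand A N) (hB : HasBand B N) :
    HasBand (A + B) N := by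
  intro i j hij
  show A i j + B i j = 0
  rw [hA i j hij, hB i j hij, add_zero]

lemma band_smul {k : Type*} [Field k] [Algebra k R] {A : ℤ → ℤ → R} {N : ℤ} (c : k)
    (hA : HasBand A N) : HasBand (c • A) N := by
  intro i j hij
  show c • A i j = 0
  rw [hA i j hij, smul_zero]

lemma jmul_Iplus_left (A : ℤ → ℤ → R) (i j : ℤ) :
    jmul (Iplus R) A i j = if 0 ≤ i then A i j else 0 := by
  unfold jmul Iplus
  rw [finsum_eq_single _ i]
  · by_cases h : 0 ≤ i <;> simp [h]
  · intro x hx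
    simp [Ne.symm hx]

lemma jmul_Iminus_right (A : ℤ → ℤ → R) (i j : ℤ) :
    jmul A (Iminus R) i j = if j < 0 then A i j else 0 := by
  unfold jmul Iminus
  rw [finsum_eq_single _ j]
  · by_cases h : j < 0 <;> simp [h]
  · intro x hx
    simp [hx]

lemma jmul_Iminus_left (A : ℤ → ℤ → R) (i j : ℤ) :
    jmul (Iminus R) A i j = if i < 0 then A i j else 0 := by
  unfold jmul Iminus
  rw [finsum_eq_single _ i]
  · by_cases h : i < 0 <;> simp [h]
  · intro x hx
    simp [Ne.symm hx]

lemma jmul_Iplus_right (A : ℤ → ℤ → R) (i j : ℤ) :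
    jmul A (Iplus R) i j = if 0 ≤ j then A i j else 0 := by
  unfold jmul Iplus
  rw [finsum_eq_single _ j]
  · by_cases h : 0 ≤ j <;> simp [h]
  · intro x hx
    simp [hx]

lemma corner1 (Y : ℤ → ℤ → R) (i j : ℤ) :
    jmul (jmul (Iplus R) Y) (Iminus R) i j = if 0 ≤ i ∧ j < 0 then Y i j else 0 := by
  rw [jmul_Iminus_right, jmul_Iplus_left]
  by_cases h1 : 0 ≤ i <;> by_cases h2 : j < 0 <;> simp [h1, h2]

lemma corner2 (X : ℤ → ℤ → R) (i j : ℤ) :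
    jmul (jmul (Iminus R) X) (Iplus R) i j = if i < 0 ∧ 0 ≤ j then X i j else 0 := by
  rw [jmul_Iplus_right, jmul_Iminus_left]
  by_cases h1 : i < 0 <;> by_cases h2 : 0 ≤ j <;> simp [h1, h2]

lemma diag_eq (X Y : ℤ → ℤ → R) (i : ℤ) :
    jmul (jmul (jmul (Iplus R) Y) (Iminus R)) (jmul (jmul (Iminus R) X) (Iplus R)) i i
      = ∑ᶠ l, if 0 ≤ i ∧ l < 0 then Y i l * X l i else 0 := by
  rw [jmul_apply (jmul (jmul (Iplus R) Y) (Iminus R)) (jmul (jmul (Iminus R) X) (Iplus R))]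
  refine finsum_congr fun l => ?_
  rw [corner1, corner2]
  by_cases h1 : 0 ≤ i <;> by_cases h2 : l < 0 <;> simp [h1, h2]

end JB

section Q
variable (k : Type*) {R : Type*} [Field k] [Ring R] [Algebra k R]

noncomputable def q : R → Rab k R := Submodule.Quotient.mk

variable {k}

lemma q_zero : q k (0 : R) = 0 := rfl

lemma q_add (x y : R) : q k (x + y) = q k x + q k y := rfl

lemma q_sub (x y : R) : q k (x - y) = q k x - q k y := rfl

lemma q_smul (c : k) (x : R) : q k (c • x) = c • q k x := rfl

lemma q_sum {ι : Type*} (s : Finset ι) (f : ι → R) :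
    q k (∑ i ∈ s, f i) = ∑ i ∈ s, q k (f i) :=
  map_sum (commSpan k R).mkQ f s

lemma q_mul_comm (x y : R) : q k (x * y) = q k (y * x) := by
  rw [q, Submodule.Quotient.eq]
  exact Submodule.subset_span ⟨x, y, rfl⟩

lemma q_rot1 (x y z : R) : q k (x * (y * z)) = q k (y * (z * x)) := by
  rw [q_mul_comm, mul_assoc]

lemma q_rot2 (x y z : R) : q k (x * (y * z)) = q k (z * (x * y)) := by
  rw [q_rot1, q_rot1]

lemma eps_smul {M : Type*} [AddCommGroup M] (a b : ℤ) (t : M) :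
    eps a b • t = (if a < 0 ∧ 0 ≤ b then t else 0) - (if 0 ≤ a ∧ b < 0 then t else 0) := by
  unfold eps
  rcases lt_or_ge a 0 with ha | ha <;> rcases lt_or_ge b 0 with hb | hb
  · simp [ha, hb, not_le.mpr ha, not_le.mpr hb]
  · simp [ha, hb, not_le.mpr ha, not_lt.mpr hb]
  · rw [if_neg (not_le.mpr hb), if_pos ha, if_neg (by omega : ¬(a < 0 ∧ 0 ≤ b)),
      if_pos ⟨ha, hb⟩, zero_sub, zero_sub, neg_smul, one_smul]
  · simp [ha, hb, not_lt.mpr ha, not_lt.mpr hb, sub_self, zero_smul]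

lemma psi_repr {N M : ℤ} {X Y : ℤ → ℤ → R} (hX : HasBand X N) (hY : HasBand Y N)
    (hN : 0 ≤ N) (hM : N ≤ M) :
    Psi k X Y = ∑ a ∈ Finset.Icc (-M) M, ∑ b ∈ Finset.Icc (-M) M,
      eps a b • q k (X a b * Y b a) := by
  have hM0 : 0 ≤ M := le_trans hN hM
  -- inner finsums become box sums
  have inner1 : ∀ A B : ℤ → ℤ → R, HasBand A N → ∀ i : ℤ,
      (∑ᶠ l, if 0 ≤ i ∧ l < 0 then A i l * B l i else 0)
        = ∑ l ∈ Finset.Icc (-M) M, if 0 ≤ i ∧ l < 0 then A i l * B l i else 0 := by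
    intro A B hA i
    apply finsum_box
    intro l hl
    by_cases hc : 0 ≤ i ∧ l < 0
    · have hA0 : A i l ≠ 0 := by
        intro h0
        rw [if_pos hc, h0, zero_mul] at hl
        exact hl rfl
      have := band_le hA hA0
      omega
    · rw [if_neg hc] at hl
      exact absurd rfl hl
  have hdiag : ∀ i : ℤ,
      (jmul (jmul (jmul (Iplus R) Y) (Iminus R)) (jmul (jmul (Iminus R) X) (Iplus R)) -
        jmul (jmul (jmul (Iplus R) X) (Iminus R)) (jmul (jmul (Iminus R) Y) (Iplus R))) i i
      = (∑ l ∈ Finset.Icc (-M) M, if 0 ≤ i ∧ l < 0 then Y i l * X l i else 0)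
        - (∑ l ∈ Finset.Icc (-M) M, if 0 ≤ i ∧ l < 0 then X i l * Y l i else 0) := by
    intro i
    have h0 : (jmul (jmul (jmul (Iplus R) Y) (Iminus R)) (jmul (jmul (Iminus R) X) (Iplus R)) -
        jmul (jmul (jmul (Iplus R) X) (Iminus R)) (jmul (jmul (Iminus R) Y) (Iplus R))) i i
        = jmul (jmul (jmul (Iplus R) Y) (Iminus R)) (jmul (jmul (Iminus R) X) (Iplus R)) i i -
          jmul (jmul (jmul (Iplus R) X) (Iminus R)) (jmul (jmul (Iminus R) Y) (Iplus R)) i i := rfl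
    rw [h0, diag_eq X Y, diag_eq Y X, inner1 Y X hY, inner1 X Y hX]
  have houter :
      (∑ᶠ i, (jmul (jmul (jmul (Iplus R) Y) (Iminus R)) (jmul (jmul (Iminus R) X) (Iplus R)) -
        jmul (jmul (jmul (Iplus R) X) (Iminus R)) (jmul (jmul (Iminus R) Y) (Iplus R))) i i)
      = ∑ i ∈ Finset.Icc (-M) M,
          ((∑ l ∈ Finset.Icc (-M) M, if 0 ≤ i ∧ l < 0 then Y i l * X l i else 0)
            - (∑ l ∈ Finset.Icc (-M) M, if 0 ≤ i ∧ l < 0 then X i l * Y l i else 0)) := by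
    rw [finsum_congr hdiag]
    apply finsum_box
    intro i hi
    by_contra hb
    apply hi
    have z : ∀ A B : ℤ → ℤ → R, HasBand A N →
        (∑ l ∈ Finset.Icc (-M) M, if 0 ≤ i ∧ l < 0 then A i l * B l i else 0) = 0 := by
      intro A B hA
      apply Finset.sum_eq_zero
      intro l hl
      rw [Finset.mem_Icc] at hl
      split_ifs with hc
      · obtain ⟨hi0, hl0⟩ := hc
        have : A i l = 0 := by
          apply hA
          rw [abs_of_nonneg (by omega)]
          omega
        rw [this, zero_mul]
      · rfl
    rw [z Y X hY, z X Y hX, sub_zero]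
  show Submodule.Quotient.mk _ = _
  rw [houter]
  show q k _ = _
  rw [q_sum]
  -- massage RHS
  have rhs : ∀ a b : ℤ, eps a b • q k (X a b * Y b a)
      = (if a < 0 ∧ 0 ≤ b then q k (X a b * Y b a) else 0)
        - (if 0 ≤ a ∧ b < 0 then q k (X a b * Y b a) else 0) := fun a b => eps_smul a b _
  calc ∑ i ∈ Finset.Icc (-M) M,
        q k ((∑ l ∈ Finset.Icc (-M) M, if 0 ≤ i ∧ l < 0 then Y i l * X l i else 0)
          - (∑ l ∈ Finset.Icc (-M) M, if 0 ≤ i ∧ l < 0 then X i l * Y l i else 0))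
      = ∑ i ∈ Finset.Icc (-M) M,
        ((∑ l ∈ Finset.Icc (-M) M, if 0 ≤ i ∧ l < 0 then q k (Y i l * X l i) else 0)
          - (∑ l ∈ Finset.Icc (-M) M, if 0 ≤ i ∧ l < 0 then q k (X i l * Y l i) else 0)) := by
        refine Finset.sum_congr rfl fun i _ => ?_
        rw [q_sub, q_sum, q_sum]
        congr 1 <;> refine Finset.sum_congr rfl fun l _ => ?_ <;> split_ifs <;> simp [q_zero]
    _ = ∑ a ∈ Finset.Icc (-M) M, ∑ b ∈ Finset.Icc (-M) M, eps a b • q k (X a b * Y b a) := by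
        simp only [rhs, Finset.sum_sub_distrib]
        congr 1
        rw [Finset.sum_comm]
        refine Finset.sum_congr rfl fun i _ => Finset.sum_congr rfl fun l _ => ?_
        by_cases hc : i < 0 ∧ 0 ≤ l
        · rw [if_pos (by tauto), if_pos hc, q_mul_comm]
        · rw [if_neg (by tauto), if_neg hc]

lemma eps_antisymm (a b : ℤ) : eps b a = - eps a b := by unfold eps; ring

lemma psi_skew {N : ℤ} {X Y : ℤ → ℤ → R} (hX : HasBand X N) (hY : HasBand Y N) (hN : 0 ≤ N) :
    Psi k X Y = - Psi k Y X := by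
  rw [psi_repr hX hY hN le_rfl, psi_repr hY hX hN le_rfl, Finset.sum_comm]
  simp only [← Finset.sum_neg_distrib]
  refine Finset.sum_congr rfl fun u _ => Finset.sum_congr rfl fun v _ => ?_
  rw [q_mul_comm, eps_antisymm, neg_smul]

lemma psi_linear_left {N : ℤ} {X X' Y : ℤ → ℤ → R} (c : k) (hX : HasBand X N)
    (hX' : HasBand X' N) (hY : HasBand Y N) (hN : 0 ≤ N) :
    Psi k (c • X + X') Y = c • Psi k X Y + Psi k X' Y := by
  rw [psi_repr (band_add (band_smul c hX) hX') hY hN le_rfl,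
      psi_repr hX hY hN le_rfl, psi_repr hX' hY hN le_rfl]
  rw [Finset.smul_sum, ← Finset.sum_add_distrib]
  refine Finset.sum_congr rfl fun a _ => ?_
  rw [Finset.smul_sum, ← Finset.sum_add_distrib]
  refine Finset.sum_congr rfl fun b _ => ?_
  have h0 : (c • X + X') a b = c • X a b + X' a b := rfl
  rw [h0, add_mul, smul_mul_assoc, q_add, q_smul, smul_add, smul_comm (eps a b) c]

lemma psi_linear_right {N : ℤ} {X Y Y' : ℤ → ℤ → R} (c : k) (hX : HasBand X N)
    (hY : HasBand Y N) (hY' : HasBand Y' N) (hN : 0 ≤ N) :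
    Psi k X (c • Y + Y') = c • Psi k X Y + Psi k X Y' := by
  rw [psi_repr hX (band_add (band_smul c hY) hY') hN le_rfl,
      psi_repr hX hY hN le_rfl, psi_repr hX hY' hN le_rfl]
  rw [Finset.smul_sum, ← Finset.sum_add_distrib]
  refine Finset.sum_congr rfl fun a _ => ?_
  rw [Finset.smul_sum, ← Finset.sum_add_distrib]
  refine Finset.sum_congr rfl fun b _ => ?_
  have h0 : (c • Y + Y') b a = c • Y b a + Y' b a := rfl
  rw [h0, mul_add, mul_smul_comm, q_add, q_smul, smul_add, smul_comm (eps a b) c]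

lemma rot_cab {M' : Type*} [AddCommMonoid M'] (w : Finset ℤ) (f : ℤ → ℤ → ℤ → M') :
    (∑ a ∈ w, ∑ b ∈ w, ∑ l ∈ w, f a b l) = ∑ a ∈ w, ∑ b ∈ w, ∑ l ∈ w, f l a b := by
  rw [Finset.sum_comm]
  exact Finset.sum_congr rfl fun b _ => Finset.sum_comm

lemma rot_bca {M' : Type*} [AddCommMonoid M'] (w : Finset ℤ) (f : ℤ → ℤ → ℤ → M') :
    (∑ a ∈ w, ∑ b ∈ w, ∑ l ∈ w, f a b l) = ∑ a ∈ w, ∑ b ∈ w, ∑ l ∈ w, f b l a := by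
  rw [rot_cab w f]
  exact rot_cab w (fun a b l => f l a b)

lemma tri {M' : Type*} [AddCommGroup M'] (w : Finset ℤ) (V : ℤ → ℤ → ℤ → M') :
    (∑ a ∈ w, ∑ b ∈ w, ∑ l ∈ w, eps a b • V a b l)
    + (∑ a ∈ w, ∑ b ∈ w, ∑ l ∈ w, eps a b • V b l a)
    + (∑ a ∈ w, ∑ b ∈ w, ∑ l ∈ w, eps a b • V l a b) = 0 := by
  have h2 : (∑ a ∈ w, ∑ b ∈ w, ∑ l ∈ w, eps a b • V b l a)
      = ∑ a ∈ w, ∑ b ∈ w, ∑ l ∈ w, eps l a • V a b l :=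
    (rot_bca w fun p q r => eps r p • V p q r).symm
  have h3 : (∑ a ∈ w, ∑ b ∈ w, ∑ l ∈ w, eps a b • V l a b)
      = ∑ a ∈ w, ∑ b ∈ w, ∑ l ∈ w, eps b l • V a b l :=
    (rot_cab w fun p q r => eps q r • V p q r).symm
  rw [h2, h3]
  simp only [← Finset.sum_add_distrib, ← add_zsmul]
  refine Finset.sum_eq_zero fun a _ => Finset.sum_eq_zero fun b _ => Finset.sum_eq_zero fun l _ => ?_
  have h0 : eps a b + eps l a + eps b l = 0 := by unfold eps; ring
  rw [h0, zero_zsmul]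

lemma lieB_entry {A B : ℤ → ℤ → R} {N : ℤ} (hA : HasBand A N) (hB : HasBand B N)
    {a : ℤ} (b : ℤ) {C : ℤ} (h1 : -C ≤ a - N) (h2 : a + N ≤ C) :
    lieB A B a b = ∑ l ∈ Finset.Icc (-C) C, (A a l * B l b - B a l * A l b) := by
  have j1 : (∑ᶠ l, A a l * B l b) = ∑ l ∈ Finset.Icc (-C) C, A a l * B l b := by
    apply finsum_box
    intro l hl
    have hA0 : A a l ≠ 0 := fun h => hl (by rw [h, zero_mul])
    have := band_le hA hA0
    omega
  have j2 : (∑ᶠ l, B a l * A l b) = ∑ l ∈ Finset.Icc (-C) C, B a l * A l b := by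
    apply finsum_box
    intro l hl
    have hB0 : B a l ≠ 0 := fun h => hl (by rw [h, zero_mul])
    have := band_le hB hB0
    omega
  rw [lieB_apply, jmul_apply A B, jmul_apply B A, j1, j2, ← Finset.sum_sub_distrib]

lemma mono_vanish {A B C : ℤ → ℤ → R} {N : ℤ} (hA : HasBand A N) (hB : HasBand B N)
    (hC : HasBand C N) {a b : ℤ} (l : ℤ) (he : eps a b ≠ 0)
    (hout : N + N < a ∨ a < -(N + N) ∨ N + N < b ∨ b < -(N + N)) :
    A a l * (B l b * C b a) = 0 := by
  by_cases h1 : A a l = 0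
  · rw [h1, zero_mul]
  by_cases h2 : B l b = 0
  · rw [h2, zero_mul, mul_zero]
  by_cases h3 : C b a = 0
  · rw [h3, mul_zero, mul_zero]
  exfalso
  have e1 := band_le hA h1
  have e2 := band_le hB h2
  have e3 := band_le hC h3
  have hs := eps_straddle he
  omega

lemma psi_lie_repr {X Y Z : ℤ → ℤ → R} {N : ℤ} (hX : HasBand X N) (hY : HasBand Y N)
    (hZ : HasBand Z N) (hN : 0 ≤ N) :
    Psi k (lieB X Y) Z
      = ∑ a ∈ Finset.Icc (-(N+N+N)) (N+N+N), ∑ b ∈ Finset.Icc (-(N+N+N)) (N+N+N),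
          ∑ l ∈ Finset.Icc (-(N+N+N)) (N+N+N),
        eps a b • (q k (X a l * (Y l b * Z b a)) - q k (Y a l * (X l b * Z b a))) := by
  have huw : Finset.Icc (-(N+N)) (N+N) ⊆ Finset.Icc (-(N+N+N)) (N+N+N) := by
    apply Finset.Icc_subset_Icc <;> omega
  have vanish : ∀ a b l : ℤ, (N+N < a ∨ a < -(N+N) ∨ N+N < b ∨ b < -(N+N)) →
      eps a b • (q k (X a l * (Y l b * Z b a)) - q k (Y a l * (X l b * Z b a))) = 0 := by
    intro a b l hout
    by_cases he : eps a b = 0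
    · rw [he, zero_zsmul]
    · rw [mono_vanish hX hY hZ l he hout, mono_vanish hY hX hZ l he hout, sub_self, smul_zero]
  calc Psi k (lieB X Y) Z
      = ∑ a ∈ Finset.Icc (-(N+N)) (N+N), ∑ b ∈ Finset.Icc (-(N+N)) (N+N),
          eps a b • q k (lieB X Y a b * Z b a) :=
        psi_repr (lieB_band hX hY) (hZ.mono_s14 (by omega)) (by omega) le_rfl
    _ = ∑ a ∈ Finset.Icc (-(N+N)) (N+N), ∑ b ∈ Finset.Icc (-(N+N)) (N+N),
          ∑ l ∈ Finset.Icc (-(N+N+N)) (N+N+N),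
            eps a b • (q k (X a l * (Y l b * Z b a)) - q k (Y a l * (X l b * Z b a))) := by
        refine Finset.sum_congr rfl fun a ha => Finset.sum_congr rfl fun b _ => ?_
        rw [Finset.mem_Icc] at ha
        rw [lieB_entry hX hY b (C := N+N+N) (by omega) (by omega)]
        rw [Finset.sum_mul, q_sum, Finset.smul_sum]
        refine Finset.sum_congr rfl fun l _ => ?_
        rw [sub_mul, mul_assoc, mul_assoc, q_sub]
    _ = ∑ a ∈ Finset.Icc (-(N+N)) (N+N), ∑ b ∈ Finset.Icc (-(N+N+N)) (N+N+N),
          ∑ l ∈ Finset.Icc (-(N+N+N)) (N+N+N),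
            eps a b • (q k (X a l * (Y l b * Z b a)) - q k (Y a l * (X l b * Z b a))) := by
        refine Finset.sum_congr rfl fun a _ => Finset.sum_subset huw fun b _ hbu => ?_
        rw [Finset.mem_Icc] at hbu
        push_neg at hbu
        exact Finset.sum_eq_zero fun l _ => vanish a b l (by omega)
    _ = ∑ a ∈ Finset.Icc (-(N+N+N)) (N+N+N), ∑ b ∈ Finset.Icc (-(N+N+N)) (N+N+N),
          ∑ l ∈ Finset.Icc (-(N+N+N)) (N+N+N),
            eps a b • (q k (X a l * (Y l b * Z b a)) - q k (Y a l * (X l b * Z b a))) := by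
        refine Finset.sum_subset huw fun a _ hau => ?_
        rw [Finset.mem_Icc] at hau
        push_neg at hau
        exact Finset.sum_eq_zero fun b _ => Finset.sum_eq_zero fun l _ => vanish a b l (by omega)

end Q

theorem statement14 (k R : Type*) [Field k] [CharZero k] [Ring R] [Algebra k R] :
    -- `k`-bilinearity
    (∀ (c : k) (X X' Y : ℤ → ℤ → R), IsJacobi X → IsJacobi X' → IsJacobi Y →
      Psi k (c • X + X') Y = c • Psi k X Y + Psi k X' Y) ∧
    (∀ (c : k) (X Y Y' : ℤ → ℤ → R), IsJacobi X → IsJacobi Y → IsJacobi Y' →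
      Psi k X (c • Y + Y') = c • Psi k X Y + Psi k X Y') ∧
    -- skew-symmetry
    (∀ X Y : ℤ → ℤ → R, IsJacobi X → IsJacobi Y → Psi k X Y = -Psi k Y X) ∧
    -- cocycle identity
    (∀ X Y Z : ℤ → ℤ → R, IsJacobi X → IsJacobi Y → IsJacobi Z →
      Psi k (lieB X Y) Z + Psi k (lieB Y Z) X + Psi k (lieB Z X) Y = 0) := by
  refine ⟨?_, ?_, ?_, ?_⟩
  · rintro c X X' Y ⟨N1, h1⟩ ⟨N2, h2⟩ ⟨N3, h3⟩
    refine psi_linear_left c (h1.mono_s14 ?_) (h2.mono_s14 ?_) (h3.mono_s14 ?_)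
      (N := max N1 (max N2 (max N3 0)) ) ?_
    · exact le_max_left _ _
    · exact le_trans (le_max_left _ _) (le_max_right _ _)
    · exact le_trans (le_trans (le_max_left _ _) (le_max_right _ _)) (le_max_right _ _)
    · exact le_trans (le_trans (le_max_right _ _) (le_max_right _ _)) (le_max_right _ _)
  · rintro c X Y Y' ⟨N1, h1⟩ ⟨N2, h2⟩ ⟨N3, h3⟩
    refine psi_linear_right c (h1.mono_s14 ?_) (h2.mono_s14 ?_) (h3.mono_s14 ?_)
      (N := max N1 (max N2 (max N3 0)) ) ?_
    · exact le_max_left _ _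
    · exact le_trans (le_max_left _ _) (le_max_right _ _)
    · exact le_trans (le_trans (le_max_left _ _) (le_max_right _ _)) (le_max_right _ _)
    · exact le_trans (le_trans (le_max_right _ _) (le_max_right _ _)) (le_max_right _ _)
  · rintro X Y ⟨N1, h1⟩ ⟨N2, h2⟩
    refine psi_skew (h1.mono_s14 ?_) (h2.mono_s14 ?_) (N := max N1 (max N2 0)) ?_
    · exact le_max_left _ _
    · exact le_trans (le_max_left _ _) (le_max_right _ _)
    · exact le_trans (le_max_right _ _) (le_max_right _ _)
  · rintro X Y Z ⟨N1, hX1⟩ ⟨N2, hY1⟩ ⟨N3, hZ1⟩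
    set N : ℤ := max N1 (max N2 (max N3 0)) with hNdef
    have hX : HasBand X N := hX1.mono_s14 (le_max_left _ _)
    have hY : HasBand Y N := hY1.mono_s14 (le_trans (le_max_left _ _) (le_max_right _ _))
    have hZ : HasBand Z N :=
      hZ1.mono_s14 (le_trans (le_trans (le_max_left _ _) (le_max_right _ _)) (le_max_right _ _))
    have hN : 0 ≤ N := le_trans (le_trans (le_max_right _ _) (le_max_right _ _)) (le_max_right _ _)
    rw [psi_lie_repr hX hY hZ hN, psi_lie_repr hY hZ hX hN, psi_lie_repr hZ hX hY hN]
    simp only [smul_sub, Finset.sum_sub_distrib]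
    have h3 : (∑ a ∈ Finset.Icc (-(N+N+N)) (N+N+N), ∑ b ∈ Finset.Icc (-(N+N+N)) (N+N+N),
          ∑ l ∈ Finset.Icc (-(N+N+N)) (N+N+N), eps a b • q k (Y a l * (Z l b * X b a)))
        = ∑ a ∈ Finset.Icc (-(N+N+N)) (N+N+N), ∑ b ∈ Finset.Icc (-(N+N+N)) (N+N+N),
          ∑ l ∈ Finset.Icc (-(N+N+N)) (N+N+N),
            eps a b • q k (X b a * (Y a l * Z l b)) :=
      Finset.sum_congr rfl fun a _ => Finset.sum_congr rfl fun b _ =>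
        Finset.sum_congr rfl fun l _ => by rw [q_rot2]
    have h5 : (∑ a ∈ Finset.Icc (-(N+N+N)) (N+N+N), ∑ b ∈ Finset.Icc (-(N+N+N)) (N+N+N),
          ∑ l ∈ Finset.Icc (-(N+N+N)) (N+N+N), eps a b • q k (Z a l * (X l b * Y b a)))
        = ∑ a ∈ Finset.Icc (-(N+N+N)) (N+N+N), ∑ b ∈ Finset.Icc (-(N+N+N)) (N+N+N),
          ∑ l ∈ Finset.Icc (-(N+N+N)) (N+N+N),
            eps a b • q k (X l b * (Y b a * Z a l)) :=
      Finset.sum_congr rfl fun a _ => Finset.sum_congr rfl fun b _ =>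
        Finset.sum_congr rfl fun l _ => by rw [q_rot1]
    have h4 : (∑ a ∈ Finset.Icc (-(N+N+N)) (N+N+N), ∑ b ∈ Finset.Icc (-(N+N+N)) (N+N+N),
          ∑ l ∈ Finset.Icc (-(N+N+N)) (N+N+N), eps a b • q k (Z a l * (Y l b * X b a)))
        = ∑ a ∈ Finset.Icc (-(N+N+N)) (N+N+N), ∑ b ∈ Finset.Icc (-(N+N+N)) (N+N+N),
          ∑ l ∈ Finset.Icc (-(N+N+N)) (N+N+N),
            eps a b • q k (Y l b * (X b a * Z a l)) :=
      Finset.sum_congr rfl fun a _ => Finset.sum_congr rfl fun b _ =>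
        Finset.sum_congr rfl fun l _ => by rw [q_rot1]
    have h6 : (∑ a ∈ Finset.Icc (-(N+N+N)) (N+N+N), ∑ b ∈ Finset.Icc (-(N+N+N)) (N+N+N),
          ∑ l ∈ Finset.Icc (-(N+N+N)) (N+N+N), eps a b • q k (X a l * (Z l b * Y b a)))
        = ∑ a ∈ Finset.Icc (-(N+N+N)) (N+N+N), ∑ b ∈ Finset.Icc (-(N+N+N)) (N+N+N),
          ∑ l ∈ Finset.Icc (-(N+N+N)) (N+N+N),
            eps a b • q k (Y b a * (X a l * Z l b)) :=
      Finset.sum_congr rfl fun a _ => Finset.sum_congr rfl fun b _ =>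
        Finset.sum_congr rfl fun l _ => by rw [q_rot2]
    rw [h3, h4, h5, h6]
    have c1 := tri (Finset.Icc (-(N+N+N)) (N+N+N))
      (fun a b l => q k (X a l * (Y l b * Z b a)))
    have c2 := tri (Finset.Icc (-(N+N+N)) (N+N+N))
      (fun a b l => q k (Y a l * (X l b * Z b a)))
    have hre : ∀ p1 p2 r2 r3 s2 s3 : Rab k R, p1 + r2 + r3 = 0 → p2 + s2 + s3 = 0 →
        (p1 - p2) + (r2 - s3) + (r3 - s2) = 0 := by
      intro p1 p2 r2 r3 s2 s3 e1 e2
      have e : (p1 - p2) + (r2 - s3) + (r3 - s2) = (p1 + r2 + r3) - (p2 + s2 + s3) := by abel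
      rw [e, e1, e2, sub_zero]
    exact hre _ _ _ _ _ _ c1 c2
end
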